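/- Let G = ℤ wr ℤ with standard generators a, b, and define c_1 = a and c_{i+1} = [c_i, b], so that c_m is the (m−1)-fold commutator [⋯[[a,b],b],⋯,b]. For every integer m ≥ 1, the subgroup H_m = ⟨b, c_m⟩ of G is isomorphic to ℤ wr ℤ, is subnormal in G, and has distortion function Δ_{H_m}^G(l) ≈ l^m. In particular, H_2 = ⟨b, [a,b]⟩ is a normal subgroup of G with quadratic distortion Δ_{H_2}^G(l) ≈ l². -/

import Mathlib

/-!
In `ℤ wr ℤ` the base is the group of finitely supported `f : ℤ → ℤ`, and `⁅inl f, b⁆ = inl (Δ f)`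
for the difference operator `Δ f (x) = f x - f (x + 1)`. Since `Δ` is injective and commutes with
the shifts, `Φₙ = Δⁿ × id` is an injective endomorphism fixing `b` and sending `a` to `c_{n+1}`,
so `H_{n+1}` is its image and is isomorphic to `ℤ wr ℤ`. The image of `Φ₁` is the kernel of the
coefficient-sum character, hence normal, and `Φₖ` transports this to `im Φₖ₊₁ ⊴ im Φₖ`.

An element of word length `r` has its base part supported in `[-r, r]` with `ℓ¹`-norm at most `r`.
Inverting `Δ` by tail sums keeps the support and multiplies the `ℓ¹`-norm by at most `2r + 1`, so
`Φₙ⁻¹` of it has length `O(r^(n+1))`. Conversely, with `Θ = ∑_{j<l} shift_j`, the element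
`Θⁿ (l • δ₀)` has coefficient sum `l^(n+1)`, which bounds its length from below, while its image
under `Φₙ` is an `n`-fold commutator of `a^l` with `b^l`, of length at most `4ⁿ l`.
-/

open scoped Pointwise
open scoped commutatorElement

namespace DistortionPaper

section Defs

variable (A B : Type*) [Group A] [Group B]

/-- The base group of the restricted wreath product: finitely supported functions `B → A`
under pointwise multiplication, as a subgroup of `B → A`. -/
def WreathBase : Subgroup (B → A) where
  carrier := {f | (Function.mulSupport f).Finite}
  one_mem' := by
    simp [Function.mulSupport_one]
  mul_mem' := by
    intro f g hf hg
    exact ((Set.Finite.union hf hg).subset (Function.mulSupport_mul f g))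
  inv_mem' := by
    intro f hf
    simpa [Function.mulSupport_inv] using hf

/-- The shift automorphism of the base group: `(g ∘ f)(x) = f(x * g)`. -/
def wreathShift (g : B) : WreathBase A B ≃* WreathBase A B where
  toFun f := ⟨fun x => (f : B → A) (x * g), by
    have h : Function.mulSupport (fun x => (f : B → A) (x * g))
        ⊆ (fun x : B => x * g) ⁻¹' Function.mulSupport (f : B → A) := fun x hx => hx
    exact (Set.Finite.preimage (Set.injOn_of_injective (mul_left_injective g)) f.2).subset h⟩
  invFun f := ⟨fun x => (f : B → A) (x * g⁻¹), by
    have h : Function.mulSupport (fun x => (f : B → A) (x * g⁻¹))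
        ⊆ (fun x : B => x * g⁻¹) ⁻¹' Function.mulSupport (f : B → A) := fun x hx => hx
    exact (Set.Finite.preimage (Set.injOn_of_injective (mul_left_injective g⁻¹)) f.2).subset h⟩
  left_inv f := Subtype.ext <| funext fun x => by simp [mul_assoc]
  right_inv f := Subtype.ext <| funext fun x => by simp [mul_assoc]
  map_mul' f₁ f₂ := Subtype.ext <| funext fun _ => rfl

/-- The action of `B` on the base group by shifts. -/
def wreathAction : B →* MulAut (WreathBase A B) where
  toFun g := wreathShift A B g
  map_one' := by
    refine MulEquiv.ext fun f => Subtype.ext <| funext fun x => ?_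
    show (f : B → A) (x * 1) = (f : B → A) x
    rw [mul_one]
  map_mul' g₁ g₂ := by
    refine MulEquiv.ext fun f => Subtype.ext <| funext fun x => ?_
    show (f : B → A) (x * (g₁ * g₂)) = (f : B → A) (x * g₁ * g₂)
    rw [mul_assoc]

/-- The restricted wreath product `A wr B`. -/
abbrev WreathProduct := WreathBase A B ⋊[wreathAction A B] B

/-- The element of the base group supported at `1 ∈ B` with value `a`. -/
noncomputable def toBase (a : A) : WreathBase A B := by
  classical
  exact ⟨fun x => if x = (1 : B) then a else 1, by
    apply Set.Finite.subset (Set.finite_singleton (1 : B))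
    intro x hx
    simp only [Function.mem_mulSupport] at hx
    simp only [Set.mem_singleton_iff]
    by_contra hne
    rw [if_neg hne] at hx
    exact hx rfl⟩

/-- The canonical copy of `A` in `A wr B` (functions supported at `1`). -/
noncomputable def ofPassive (a : A) : WreathProduct A B :=
  SemidirectProduct.inl (toBase A B a)

/-- The canonical copy of `B` in `A wr B`. -/
def ofActive (g : B) : WreathProduct A B := SemidirectProduct.inr g

/-- The generating set `S ∪ T` of `A wr B` obtained from generating sets `S` of `A`
and `T` of `B`. -/
def wreathGen (S : Set A) (T : Set B) : Set (WreathProduct A B) :=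
  (fun a => ofPassive A B a) '' S ∪ (fun g => ofActive A B g) '' T

end Defs

/-- Word length of `g` with respect to the set `T`: the least `n` such that `g` is a
product of `n` elements of `T ∪ T⁻¹` (and `0` if no such `n` exists). -/
noncomputable def wordLength {G : Type*} [Group G] (T : Set G) (g : G) : ℕ :=
  sInf {n | ∃ f : Fin n → G, (∀ i, f i ∈ T ∪ T⁻¹) ∧ (List.ofFn f).prod = g}

/-- The distortion function of a subgroup `H` of `G`, where `T` is a generating set of `G`
and `S` a generating set of `H`. -/
noncomputable def distortion {G : Type*} [Group G] (T : Set G) (H : Subgroup G)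
    (S : Set H) (l : ℕ) : ℕ :=
  sSup (wordLength S '' {h : H | wordLength T (h : G) ≤ l})

/-- `f ⪯ g` : there is `C > 0` with `f l ≤ C * g (C * l)` for all `l`. -/
def Dominates (f g : ℕ → ℕ) : Prop := ∃ C : ℕ, 0 < C ∧ ∀ l, f l ≤ C * g (C * l)

/-- `f ≈ g` : `f ⪯ g` and `g ⪯ f`. -/
def DistEquiv (f g : ℕ → ℕ) : Prop := Dominates f g ∧ Dominates g f

/-- A subgroup is subnormal if there is a finite chain from it to the whole group,
each term normal in the next. -/
def IsSubnormal {G : Type*} [Group G] (H : Subgroup G) : Prop :=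
  ∃ (n : ℕ) (c : ℕ → Subgroup G), c 0 = H ∧ c n = ⊤ ∧
    ∀ i < n, c i ≤ c (i + 1) ∧ ∀ x ∈ c (i + 1), ∀ h ∈ c i, x * h * x⁻¹ ∈ c i

/-- `ℤ` as a multiplicative group. -/
abbrev Mℤ := Multiplicative ℤ

/-- The wreath product `ℤ wr ℤ`. -/
abbrev ZwrZ := WreathProduct Mℤ Mℤ

/-- The standard generator `a` of `ℤ wr ℤ` (passive copy, supported at `1`). -/
noncomputable def aZ : ZwrZ := ofPassive Mℤ Mℤ (Multiplicative.ofAdd 1)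

/-- The standard generator `b` of `ℤ wr ℤ` (active copy). -/
def bZ : ZwrZ := ofActive Mℤ Mℤ (Multiplicative.ofAdd 1)


/-- The iterated commutators `c_1 = a`, `c_{i+1} = [c_i, b]` in `ℤ wr ℤ`
(here `iterC i = c_{i+1}`, i.e. `iterC 0 = a`). -/
noncomputable def iterC : ℕ → ZwrZ
  | 0 => aZ
  | i + 1 => ⁅iterC i, bZ⁆

section WordLength

variable {G : Type*} [Group G] {T : Set G}

lemma wordLength_le_length {L : List G} (hL : ∀ y ∈ L, y ∈ T ∪ T⁻¹) :
    wordLength T L.prod ≤ L.length :=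
  Nat.sInf_le ⟨L.get, fun i => hL _ (L.get_mem i), by rw [List.ofFn_get]⟩

lemma exists_list_length_eq_wordLength {g : G} (hg : g ∈ Subgroup.closure T) :
    ∃ L : List G, (∀ y ∈ L, y ∈ T ∪ T⁻¹) ∧ L.prod = g ∧ L.length = wordLength T g := by
  rw [← Subgroup.mem_toSubmonoid, Subgroup.closure_toSubmonoid] at hg
  obtain ⟨L, hL, rfl⟩ := Submonoid.exists_list_of_mem_closure hg
  obtain ⟨f, hf, hprod⟩ := Nat.sInf_mem (s := {n | ∃ f : Fin n → G, (∀ i, f i ∈ T ∪ T⁻¹) ∧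
    (List.ofFn f).prod = L.prod}) ⟨L.length, L.get, fun i => hL _ (L.get_mem i), by
      rw [List.ofFn_get]⟩
  exact ⟨List.ofFn f, List.forall_mem_ofFn_iff.2 hf, hprod, List.length_ofFn⟩

@[simp] lemma wordLength_one : wordLength T (1 : G) = 0 :=
  Nat.le_zero.1 (wordLength_le_length (L := []) (by simp))

lemma wordLength_mul_le {g h : G} (hg : g ∈ Subgroup.closure T) (hh : h ∈ Subgroup.closure T) :
    wordLength T (g * h) ≤ wordLength T g + wordLength T h := by
  obtain ⟨L, hL, rfl, hlen⟩ := exists_list_length_eq_wordLength hg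
  obtain ⟨M, hM, rfl, hlen'⟩ := exists_list_length_eq_wordLength hh
  rw [← hlen, ← hlen', ← List.length_append, ← List.prod_append]
  exact wordLength_le_length fun y hy => (List.mem_append.1 hy).elim (hL y) (hM y)

lemma wordLength_inv_le {g : G} (hg : g ∈ Subgroup.closure T) :
    wordLength T g⁻¹ ≤ wordLength T g := by
  obtain ⟨L, hL, rfl, hlen⟩ := exists_list_length_eq_wordLength hg
  rw [← hlen, List.prod_inv_reverse, ← List.length_map (f := fun x : G => x⁻¹),
    ← List.length_reverse]
  refine wordLength_le_length fun y hy => ?_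
  obtain ⟨z, hz, rfl⟩ := List.mem_map.1 (List.mem_reverse.1 hy)
  simpa [or_comm] using hL z hz

lemma wordLength_zpow_le {t : G} (ht : t ∈ T) (k : ℤ) : wordLength T (t ^ k) ≤ k.natAbs := by
  obtain ⟨n, rfl | rfl⟩ := Int.eq_nat_or_neg k
  · simpa using wordLength_le_length (L := List.replicate n t) fun y hy =>
      List.eq_of_mem_replicate hy ▸ Or.inl ht
  · simpa using wordLength_le_length (L := List.replicate n t⁻¹) fun y hy =>
      List.eq_of_mem_replicate hy ▸ Or.inr (by simpa using ht)

lemma wordLength_commutator_le {g h : G} (hg : g ∈ Subgroup.closure T)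
    (hh : h ∈ Subgroup.closure T) :
    wordLength T ⁅g, h⁆ ≤ 2 * wordLength T g + 2 * wordLength T h := by
  have hg' := Subgroup.inv_mem _ hg
  have hh' := Subgroup.inv_mem _ hh
  have hgh := Subgroup.mul_mem _ hg hh
  have hghg := Subgroup.mul_mem _ hgh hg'
  rw [commutatorElement_def]
  have := wordLength_mul_le hghg hh'
  have := wordLength_mul_le hgh hg'
  have := wordLength_mul_le hg hh
  have := wordLength_inv_le hg
  have := wordLength_inv_le hh
  omega

lemma wordLength_map_mulEquiv {G' : Type*} [Group G'] (e : G ≃* G') (T : Set G) (g : G) :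
    wordLength (e '' T) (e g) = wordLength T g := by
  have hmem : ∀ y, e y ∈ e '' T ∪ (e '' T)⁻¹ ↔ y ∈ T ∪ T⁻¹ := fun y => by
    simp only [Set.mem_union, Set.mem_inv, ← map_inv, e.injective.mem_set_image]
  unfold wordLength
  congr 1
  ext n
  constructor
  · rintro ⟨f, hf, hprod⟩
    refine ⟨e.symm ∘ f, fun i => (hmem _).1 (by simpa using hf i), e.injective ?_⟩
    rw [← List.prod_hom, List.map_ofFn, ← Function.comp_assoc, e.self_comp_symm]
    exact hprod
  · rintro ⟨f, hf, hprod⟩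
    exact ⟨e ∘ f, fun i => (hmem _).2 (hf i), by rw [← List.map_ofFn, List.prod_hom, hprod]⟩

lemma le_wordLength_of_mul_le (ν : G → ℕ) (hν₁ : ν 1 = 0)
    (hν : ∀ t ∈ T ∪ T⁻¹, ∀ g, ν (t * g) ≤ ν g + 1) {g : G} (hg : g ∈ Subgroup.closure T) :
    ν g ≤ wordLength T g := by
  obtain ⟨L, hL, rfl, hlen⟩ := exists_list_length_eq_wordLength hg
  rw [← hlen]
  clear hlen hg
  induction L with
  | nil => simpa using hν₁.le
  | cons y L ih =>
    rw [List.prod_cons, List.length_cons]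
    exact (hν y (hL y List.mem_cons_self) _).trans
      (by gcongr; exact ih fun z hz => hL z (List.mem_cons_of_mem _ hz))

lemma natAbs_le_wordLength (χ : G →* Multiplicative ℤ)
    (hχ : ∀ t ∈ T, (Multiplicative.toAdd (χ t)).natAbs ≤ 1) {g : G}
    (hg : g ∈ Subgroup.closure T) :
    (Multiplicative.toAdd (χ g)).natAbs ≤ wordLength T g := by
  refine le_wordLength_of_mul_le (fun g => (Multiplicative.toAdd (χ g)).natAbs) (by simp)
    (fun t ht g => ?_) hg
  have ht' : (Multiplicative.toAdd (χ t)).natAbs ≤ 1 := by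
    rcases ht with h | h
    · exact hχ t h
    · simpa using hχ t⁻¹ h
  have := Int.natAbs_add_le (Multiplicative.toAdd (χ t)) (Multiplicative.toAdd (χ g))
  simp only [map_mul, toAdd_mul]
  omega

lemma exists_wordLength_le_mul {T' : Set G} (hT : Subgroup.closure T = ⊤) (hT' : T'.Finite) :
    ∃ C : ℕ, 0 < C ∧ ∀ g ∈ Subgroup.closure T', wordLength T g ≤ C * wordLength T' g := by
  obtain ⟨C, hC⟩ := ((hT'.union hT'.inv).image (wordLength T)).bddAbove
  refine ⟨C + 1, C.succ_pos, fun g hg => ?_⟩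
  obtain ⟨L, hL, rfl, hlen⟩ := exists_list_length_eq_wordLength hg
  rw [← hlen]
  clear hlen hg
  induction L with
  | nil => simp
  | cons y L ih =>
    have hy := hC (Set.mem_image_of_mem _ (hL y List.mem_cons_self))
    have := ih fun z hz => hL z (List.mem_cons_of_mem _ hz)
    rw [List.prod_cons, List.length_cons]
    have := wordLength_mul_le (hT ▸ Subgroup.mem_top y) (hT ▸ Subgroup.mem_top L.prod)
    nlinarith

lemma finite_setOf_wordLength_le (hT : T.Finite) (htop : Subgroup.closure T = ⊤) (l : ℕ) :
    {g : G | wordLength T g ≤ l}.Finite := by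
  have : Finite ↥(T ∪ T⁻¹) := (hT.union hT.inv).to_subtype
  refine ((List.finite_length_le _ l).image fun L : List ↥(T ∪ T⁻¹) => (L.map (↑)).prod).subset ?_
  intro g hg
  obtain ⟨L, hL, rfl, hlen⟩ :=
    exists_list_length_eq_wordLength (htop ▸ Subgroup.mem_top g)
  refine ⟨L.attach.map fun y => ⟨y.1, hL y.1 y.2⟩, by simpa [hlen] using hg, ?_⟩
  simp [List.map_map, Function.comp_def]

lemma wordLength_map_prod_le {M ι : Type*} [CommMonoid M] (φ : M →* G)
    (hT : Subgroup.closure T = ⊤) (s : Finset ι) (f : ι → M) :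
    wordLength T (φ (∏ i ∈ s, f i)) ≤ ∑ i ∈ s, wordLength T (φ (f i)) := by
  classical
  induction s using Finset.induction_on with
  | empty => simp
  | insert i s hi ih =>
    rw [Finset.prod_insert hi, Finset.sum_insert hi, map_mul]
    exact (wordLength_mul_le (hT ▸ Subgroup.mem_top _)
      (hT ▸ Subgroup.mem_top _)).trans (by gcongr)

end WordLength

section Distortion

variable {G : Type*} [Group G] {H : Subgroup G}

lemma distortion_le {T : Set G} {S : Set H} {l D : ℕ}
    (h : ∀ x : H, wordLength T (x : G) ≤ l → wordLength S x ≤ D) : distortion T H S l ≤ D := by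
  unfold distortion
  rcases (wordLength S '' {x : H | wordLength T (x : G) ≤ l}).eq_empty_or_nonempty with he | hne
  · simp [he]
  · exact csSup_le hne (by rintro _ ⟨x, hx, rfl⟩; exact h x hx)

lemma le_distortion {T : Set G} (S : Set H) (hT : T.Finite) (htop : Subgroup.closure T = ⊤)
    {l : ℕ} {x : H} (hx : wordLength T (x : G) ≤ l) : wordLength S x ≤ distortion T H S l :=
  le_csSup (((finite_setOf_wordLength_le hT htop l).preimage
    Subtype.val_injective.injOn).image _).bddAbove ⟨x, hx, rfl⟩

theorem distEquiv_distortion_pow {T₀ : Set G} {S₀ : Set H} {d : ℕ}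
    (hT₀ : T₀.Finite) (hT₀top : Subgroup.closure T₀ = ⊤)
    (hS₀ : S₀.Finite) (hS₀top : Subgroup.closure S₀ = ⊤)
    (hupper : ∃ K, ∀ x : H, wordLength S₀ x ≤ K * wordLength T₀ (x : G) ^ d)
    (hlower : ∃ K, ∀ l, ∃ x : H, wordLength T₀ (x : G) ≤ K * l ∧ l ^ d ≤ wordLength S₀ x)
    {T : Set G} {S : Set H} (hT : T.Finite) (hTtop : Subgroup.closure T = ⊤)
    (hS : S.Finite) (hStop : Subgroup.closure S = ⊤) :
    DistEquiv (distortion T H S) (· ^ d) := by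
  obtain ⟨Ku, hKu⟩ := hupper
  obtain ⟨Kl, hKl⟩ := hlower
  obtain ⟨C₁, -, hT₀T⟩ := exists_wordLength_le_mul hT₀top hT
  obtain ⟨C₂, -, hTT₀⟩ := exists_wordLength_le_mul hTtop hT₀
  obtain ⟨C₃, -, hSS₀⟩ := exists_wordLength_le_mul hStop hS₀
  obtain ⟨C₄, -, hS₀S⟩ := exists_wordLength_le_mul hS₀top hS
  constructor
  · refine ⟨C₃ * Ku + C₁ + 1, by omega, fun l => distortion_le fun x hx => ?_⟩
    calc wordLength S x ≤ C₃ * wordLength S₀ x := hSS₀ x (hS₀top ▸ Subgroup.mem_top x)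
      _ ≤ C₃ * (Ku * wordLength T₀ (x : G) ^ d) := by gcongr; exact hKu x
      _ ≤ C₃ * (Ku * (C₁ * l) ^ d) := by
          gcongr
          exact (hT₀T _ (hTtop ▸ Subgroup.mem_top _)).trans (by gcongr)
      _ ≤ (C₃ * Ku + C₁ + 1) * ((C₃ * Ku + C₁ + 1) * l) ^ d := by
          rw [← mul_assoc]
          gcongr <;> omega
  · refine ⟨C₄ + C₂ * Kl + 1, by omega, fun l => ?_⟩
    obtain ⟨x, hx, hlx⟩ := hKl l
    have hxT : wordLength T (x : G) ≤ (C₄ + C₂ * Kl + 1) * l :=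
      calc wordLength T (x : G) ≤ C₂ * wordLength T₀ (x : G) := hTT₀ _ (hT₀top ▸ Subgroup.mem_top _)
        _ ≤ C₂ * (Kl * l) := by gcongr
        _ ≤ (C₄ + C₂ * Kl + 1) * l := by
            rw [← mul_assoc]
            gcongr
            omega
    calc l ^ d ≤ wordLength S₀ x := hlx
      _ ≤ C₄ * wordLength S x := hS₀S x (hStop ▸ Subgroup.mem_top x)
      _ ≤ C₄ * distortion T H S ((C₄ + C₂ * Kl + 1) * l) := by
          gcongr
          exact le_distortion S hT hTtop hxT
      _ ≤ (C₄ + C₂ * Kl + 1) * distortion T H S ((C₄ + C₂ * Kl + 1) * l) := by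
          gcongr
          omega

end Distortion

section Base

open Multiplicative

abbrev Base : Type := WreathBase Mℤ Mℤ

def coeff (f : Base) (x : ℤ) : ℤ := toAdd ((f : Mℤ → Mℤ) (ofAdd x))

@[simp] lemma coeff_mul (f g : Base) (x : ℤ) : coeff (f * g) x = coeff f x + coeff g x := rfl

@[simp] lemma coeff_one (x : ℤ) : coeff 1 x = 0 := rfl

@[simp] lemma coeff_inv (f : Base) (x : ℤ) : coeff f⁻¹ x = -coeff f x := rfl

@[simp] lemma coeff_zpow (f : Base) (k x : ℤ) : coeff (f ^ k) x = k * coeff f x := by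
  simp [coeff, SubgroupClass.coe_zpow]

lemma coeff_prod {ι : Type*} (s : Finset ι) (g : ι → Base) (x : ℤ) :
    coeff (∏ j ∈ s, g j) x = ∑ j ∈ s, coeff (g j) x := by
  classical
  induction s using Finset.induction_on with
  | empty => simp
  | insert j s hj ih => rw [Finset.prod_insert hj, Finset.sum_insert hj, coeff_mul, ih]

lemma ext_coeff {f g : Base} (h : ∀ x, coeff f x = coeff g x) : f = g :=
  Subtype.ext <| funext fun x => h (toAdd x)

lemma finite_setOf_coeff_ne_zero (f : Base) : {x | coeff f x ≠ 0}.Finite :=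
  f.2.preimage (ofAdd.injective.injOn)

noncomputable def supp (f : Base) : Finset ℤ := (finite_setOf_coeff_ne_zero f).toFinset

@[simp] lemma mem_supp {f : Base} {x : ℤ} : x ∈ supp f ↔ coeff f x ≠ 0 := by
  simp [supp]

@[simp] lemma supp_one : supp 1 = ∅ := by
  ext x
  simp

lemma coeff_eq_zero_of_notMem_supp {f : Base} {x : ℤ} (h : x ∉ supp f) : coeff f x = 0 := by
  simpa using h

lemma supp_mul_subset (f g : Base) : supp (f * g) ⊆ supp f ∪ supp g := by
  intro x
  simp only [mem_supp, coeff_mul, Finset.mem_union]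
  omega

noncomputable def shift (t : ℤ) : Base ≃* Base := wreathAction Mℤ Mℤ (ofAdd t)

@[simp] lemma coeff_shift (t : ℤ) (f : Base) (x : ℤ) : coeff (shift t f) x = coeff f (x + t) :=
  rfl

lemma sum_supp_shift {M : Type*} [AddCommMonoid M] (φ : ℤ → M) (t : ℤ) (f : Base) :
    ∑ x ∈ supp (shift t f), φ (coeff (shift t f) x) = ∑ x ∈ supp f, φ (coeff f x) :=
  Finset.sum_nbij' (· + t) (· - t) (by simp) (by simp) (by simp) (by simp) (by simp)

noncomputable def single (s v : ℤ) : Base := shift (-s) (toBase Mℤ Mℤ (ofAdd v))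

@[simp] lemma coeff_single (s v x : ℤ) : coeff (single s v) x = if x = s then v else 0 := by
  rw [single, coeff_shift]
  simp only [coeff, toBase, ← sub_eq_add_neg]
  split_ifs <;> simp_all [div_eq_one]

lemma supp_single_subset (s v : ℤ) : supp (single s v) ⊆ {s} := by
  intro x
  simp only [mem_supp, coeff_single, Finset.mem_singleton]
  split_ifs <;> simp_all

lemma prod_single_coeff (f : Base) : ∏ x ∈ supp f, single x (coeff f x) = f := by
  refine ext_coeff fun y => ?_
  rw [coeff_prod]
  simp only [coeff_single, Finset.sum_ite_eq]
  split_ifs with h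
  · rfl
  · exact (by simpa using h : coeff f y = 0).symm

noncomputable def radius (f : Base) : ℕ := (supp f).sup Int.natAbs

@[simp] lemma radius_one : radius 1 = 0 := by simp [radius]

lemma radius_le_iff {f : Base} {r : ℕ} : radius f ≤ r ↔ ∀ x ∈ supp f, x.natAbs ≤ r :=
  Finset.sup_le_iff

lemma natAbs_le_radius {f : Base} {x : ℤ} (hx : x ∈ supp f) : x.natAbs ≤ radius f :=
  Finset.le_sup (f := Int.natAbs) hx

lemma supp_subset_Icc (f : Base) :
    supp f ⊆ Finset.Icc (-(radius f : ℤ)) (radius f) := fun x hx => by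
  have := natAbs_le_radius hx
  simp only [Finset.mem_Icc]
  omega

lemma card_supp_le (f : Base) : (supp f).card ≤ 2 * radius f + 1 := by
  have := Finset.card_le_card (supp_subset_Icc f)
  rw [Int.card_Icc] at this
  omega

lemma radius_mul_le (f g : Base) : radius (f * g) ≤ max (radius f) (radius g) :=
  radius_le_iff.2 fun x hx => by
    rcases Finset.mem_union.1 (supp_mul_subset f g hx) with h | h
    · exact le_max_of_le_left (natAbs_le_radius h)
    · exact le_max_of_le_right (natAbs_le_radius h)

lemma radius_single_le (s v : ℤ) : radius (single s v) ≤ s.natAbs :=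
  radius_le_iff.2 fun x hx => by rw [Finset.mem_singleton.1 (supp_single_subset s v hx)]

lemma radius_shift_le (t : ℤ) (f : Base) : radius (shift t f) ≤ radius f + t.natAbs :=
  radius_le_iff.2 fun x hx => by
    have := natAbs_le_radius (f := f) (x := x + t) (by simpa using hx)
    omega

noncomputable def l1Norm (f : Base) : ℕ := ∑ x ∈ supp f, (coeff f x).natAbs

@[simp] lemma l1Norm_one : l1Norm 1 = 0 := by simp [l1Norm]

lemma l1Norm_eq_sum_of_subset {f : Base} {s : Finset ℤ} (h : supp f ⊆ s) :
    l1Norm f = ∑ x ∈ s, (coeff f x).natAbs :=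
  Finset.sum_subset h fun x _ hx => by rw [coeff_eq_zero_of_notMem_supp hx]; rfl

lemma l1Norm_mul_le (f g : Base) : l1Norm (f * g) ≤ l1Norm f + l1Norm g := by
  rw [l1Norm_eq_sum_of_subset (supp_mul_subset f g),
    l1Norm_eq_sum_of_subset Finset.subset_union_left,
    l1Norm_eq_sum_of_subset Finset.subset_union_right, ← Finset.sum_add_distrib]
  exact Finset.sum_le_sum fun x _ => Int.natAbs_add_le _ _

lemma l1Norm_shift (t : ℤ) (f : Base) : l1Norm (shift t f) = l1Norm f :=
  sum_supp_shift _ t f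

lemma l1Norm_single (s v : ℤ) : l1Norm (single s v) = v.natAbs := by
  rw [l1Norm_eq_sum_of_subset (supp_single_subset s v)]
  simp

noncomputable def coeffSum (f : Base) : ℤ := ∑ x ∈ supp f, coeff f x

@[simp] lemma coeffSum_one : coeffSum 1 = 0 := by simp [coeffSum]

lemma coeffSum_eq_sum_of_subset {f : Base} {s : Finset ℤ} (h : supp f ⊆ s) :
    coeffSum f = ∑ x ∈ s, coeff f x :=
  Finset.sum_subset h fun _ _ hx => coeff_eq_zero_of_notMem_supp hx

lemma coeffSum_mul (f g : Base) : coeffSum (f * g) = coeffSum f + coeffSum g := by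
  rw [coeffSum_eq_sum_of_subset (supp_mul_subset f g),
    coeffSum_eq_sum_of_subset Finset.subset_union_left,
    coeffSum_eq_sum_of_subset Finset.subset_union_right, ← Finset.sum_add_distrib]
  rfl

lemma coeffSum_shift (t : ℤ) (f : Base) : coeffSum (shift t f) = coeffSum f :=
  sum_supp_shift id t f

lemma coeffSum_single (s v : ℤ) : coeffSum (single s v) = v := by
  rw [coeffSum_eq_sum_of_subset (supp_single_subset s v)]
  simp

noncomputable def coeffSumHom : Base →* Multiplicative ℤ :=
  MonoidHom.mk' (fun f => ofAdd (coeffSum f)) fun f g => by rw [coeffSum_mul]; rfl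

@[simp] lemma toAdd_coeffSumHom (f : Base) : toAdd (coeffSumHom f) = coeffSum f := rfl

end Base

section Diff

open Multiplicative

noncomputable def diff : Monoid.End Base where
  toFun f := f * (shift 1 f)⁻¹
  map_one' := by simp
  map_mul' f g := by rw [map_mul, mul_inv, mul_mul_mul_comm]

@[simp] lemma coeff_diff (f : Base) (x : ℤ) : coeff (diff f) x = coeff f x - coeff f (x + 1) :=
  (sub_eq_add_neg _ _).symm

lemma diff_pow_succ_apply (n : ℕ) (f : Base) : (diff ^ (n + 1)) f = (diff ^ n) (diff f) := by
  rw [pow_succ, Monoid.End.coe_mul, Function.comp_apply]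

lemma diff_shift (t : ℤ) (f : Base) : diff (shift t f) = shift t (diff f) :=
  ext_coeff fun x => by simp [add_right_comm]

lemma diff_pow_shift (n : ℕ) (t : ℤ) (f : Base) :
    (diff ^ n) (shift t f) = shift t ((diff ^ n) f) := by
  induction n generalizing f with
  | zero => rfl
  | succ n ih => rw [diff_pow_succ_apply, diff_pow_succ_apply, diff_shift, ih]

lemma coeffSum_diff (f : Base) : coeffSum (diff f) = 0 := by
  change toAdd (coeffSumHom (f * (shift 1 f)⁻¹)) = 0
  simp [coeffSum_shift]

lemma diff_injective : Function.Injective diff := by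
  refine (injective_iff_map_eq_one diff).2 fun f hf => ext_coeff fun x => ?_
  have hconst : ∀ n : ℕ, coeff f x = coeff f (x + n) := by
    intro n
    induction n with
    | zero => simp
    | succ n ih =>
      have := congrArg (coeff · (x + n)) hf
      simp only [coeff_diff, coeff_one] at this
      push_cast
      rw [ih, ← add_assoc]
      omega
  rw [coeff_one, hconst (x.natAbs + radius f + 1), coeff_eq_zero_of_notMem_supp]
  intro h
  have := natAbs_le_radius h
  omega

noncomputable def tailSum (f : Base) (x : ℤ) : ℤ := ∑ y ∈ supp f with x ≤ y, coeff f y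

lemma tailSum_eq_add (f : Base) (x : ℤ) : tailSum f x = coeff f x + tailSum f (x + 1) := by
  have hsplit : ∀ y, (if x ≤ y then coeff f y else 0)
      = (if x = y then coeff f y else 0) + (if x + 1 ≤ y then coeff f y else 0) := by
    intro y
    split_ifs <;> omega
  simp only [tailSum, Finset.sum_filter, hsplit, Finset.sum_add_distrib, Finset.sum_ite_eq]
  split_ifs with h
  · rfl
  · rw [coeff_eq_zero_of_notMem_supp h]

lemma tailSum_eq_zero {f : Base} (hf : coeffSum f = 0) {x : ℤ} (hx : radius f < x.natAbs) :
    tailSum f x = 0 := by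
  rcases le_or_gt 0 x with h | h
  · refine Finset.sum_eq_zero fun y hy => ?_
    rw [Finset.mem_filter] at hy
    have := natAbs_le_radius hy.1
    omega
  · rw [← hf, tailSum, Finset.filter_true_of_mem fun y hy => ?_, coeffSum]
    have := natAbs_le_radius hy
    omega

lemma natAbs_tailSum_le (f : Base) (x : ℤ) : (tailSum f x).natAbs ≤ l1Norm f := by
  zify
  calc |tailSum f x| ≤ ∑ y ∈ supp f with x ≤ y, |coeff f y| := Finset.abs_sum_le_sum_abs _ _
    _ ≤ ∑ y ∈ supp f, |coeff f y| :=
        Finset.sum_le_sum_of_subset_of_nonneg (Finset.filter_subset _ _) fun _ _ _ => abs_nonneg _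
    _ = l1Norm f := by simp [l1Norm]

noncomputable def integrate (f : Base) (hf : coeffSum f = 0) : Base :=
  ⟨fun x => ofAdd (tailSum f (toAdd x)), by
    refine ((Set.finite_Icc (-(radius f : ℤ)) (radius f)).preimage
      toAdd.injective.injOn).subset fun x hx => ?_
    by_contra h
    refine hx (congrArg ofAdd (tailSum_eq_zero hf ?_))
    simp only [Set.mem_preimage, Set.mem_Icc] at h
    omega⟩

lemma diff_integrate (f : Base) (hf : coeffSum f = 0) : diff (integrate f hf) = f :=
  ext_coeff fun x => by
    rw [coeff_diff]
    change tailSum f x - tailSum f (x + 1) = coeff f x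
    rw [tailSum_eq_add f x]
    ring

lemma coeff_eq_tailSum_diff (p : Base) (x : ℤ) : coeff p x = tailSum (diff p) x := by
  have hp : integrate (diff p) (coeffSum_diff p) = p :=
    diff_injective (diff_integrate _ _)
  calc coeff p x = coeff (integrate (diff p) (coeffSum_diff p)) x := by rw [hp]
    _ = tailSum (diff p) x := rfl

lemma radius_le_radius_diff (p : Base) : radius p ≤ radius (diff p) := by
  refine radius_le_iff.2 fun x hx => ?_
  by_contra! h
  exact mem_supp.1 hx ((coeff_eq_tailSum_diff p x).trans (tailSum_eq_zero (coeffSum_diff p) h))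

lemma l1Norm_le_of_diff (p : Base) :
    l1Norm p ≤ (2 * radius (diff p) + 1) * l1Norm (diff p) :=
  calc l1Norm p ≤ ∑ _x ∈ supp p, l1Norm (diff p) := Finset.sum_le_sum fun x _ => by
        rw [coeff_eq_tailSum_diff]
        exact natAbs_tailSum_le _ _
    _ = (supp p).card * l1Norm (diff p) := by rw [Finset.sum_const, smul_eq_mul]
    _ ≤ (2 * radius (diff p) + 1) * l1Norm (diff p) := by
        gcongr
        exact (card_supp_le p).trans (by gcongr; exact radius_le_radius_diff p)

lemma radius_le_radius_diff_pow (n : ℕ) (p : Base) : radius p ≤ radius ((diff ^ n) p) := by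
  induction n generalizing p with
  | zero => rfl
  | succ n ih =>
    rw [diff_pow_succ_apply]
    exact (radius_le_radius_diff p).trans (ih _)

lemma l1Norm_le_of_diff_pow (n : ℕ) (p : Base) :
    l1Norm p ≤ (2 * radius ((diff ^ n) p) + 1) ^ n * l1Norm ((diff ^ n) p) := by
  induction n generalizing p with
  | zero => simp
  | succ n ih =>
    rw [diff_pow_succ_apply]
    calc l1Norm p ≤ (2 * radius (diff p) + 1) * l1Norm (diff p) := l1Norm_le_of_diff p
      _ ≤ (2 * radius ((diff ^ n) (diff p)) + 1) *
          ((2 * radius ((diff ^ n) (diff p)) + 1) ^ n * l1Norm ((diff ^ n) (diff p))) := by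
          gcongr
          · exact radius_le_radius_diff_pow n _
          · exact ih _
      _ = _ := by ring

end Diff

section Generators

open Multiplicative SemidirectProduct

def stdGens : Set ZwrZ := {aZ, bZ}

lemma aZ_mem_stdGens : aZ ∈ stdGens := Or.inl rfl

lemma bZ_mem_stdGens : bZ ∈ stdGens := Or.inr rfl

lemma stdGens_finite : stdGens.Finite := (Set.finite_singleton bZ).insert aZ

lemma single_zero_eq_toBase (v : ℤ) : single 0 v = toBase Mℤ Mℤ (ofAdd v) :=
  ext_coeff fun x => by rw [single, coeff_shift, neg_zero, add_zero]

lemma aZ_zpow (v : ℤ) : aZ ^ v = inl (single 0 v) := by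
  have : single 0 1 ^ v = single 0 v := ext_coeff fun x => by simp
  rw [aZ, ofPassive, ← single_zero_eq_toBase, ← map_zpow, this]

lemma bZ_zpow (k : ℤ) : bZ ^ k = inr (ofAdd k) := by
  rw [bZ, ofActive, ← map_zpow, ← ofAdd_zsmul, smul_eq_mul, mul_one]

lemma inl_shift (t : ℤ) (f : Base) : inl (shift t f) = bZ ^ t * inl f * bZ ^ (-t) := by
  rw [bZ_zpow, bZ_zpow, ofAdd_neg]
  exact inl_aut _ _

lemma inl_single (s v : ℤ) : inl (single s v) = bZ ^ (-s) * aZ ^ v * bZ ^ s := by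
  rw [single, inl_shift, ← single_zero_eq_toBase, aZ_zpow, neg_neg]

lemma commutator_inl_bZ_zpow (f : Base) (k : ℤ) :
    ⁅(inl f : ZwrZ), bZ ^ k⁆ = inl (f * (shift k f)⁻¹) := by
  rw [map_mul, ← map_inv, inl_shift, map_inv, commutatorElement_def, zpow_neg]
  group

lemma mem_closure_stdGens (g : ZwrZ) : g ∈ Subgroup.closure stdGens := by
  have ha := Subgroup.subset_closure aZ_mem_stdGens
  have hb := Subgroup.subset_closure bZ_mem_stdGens
  have hleft : g.left ∈ (Subgroup.closure stdGens).comap inl := by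
    rw [← prod_single_coeff g.left]
    refine Subgroup.prod_mem _ fun x _ => ?_
    rw [Subgroup.mem_comap, inl_single]
    exact Subgroup.mul_mem _ (Subgroup.mul_mem _ (Subgroup.zpow_mem _ hb _)
      (Subgroup.zpow_mem _ ha _)) (Subgroup.zpow_mem _ hb _)
  rw [← inl_left_mul_inr_right g, ← ofAdd_toAdd g.right, ← bZ_zpow]
  exact Subgroup.mul_mem _ hleft (Subgroup.zpow_mem _ hb _)

lemma closure_stdGens : Subgroup.closure stdGens = ⊤ :=
  (Subgroup.eq_top_iff' _).2 mem_closure_stdGens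

lemma wordLength_inl_single_le (s v : ℤ) :
    wordLength stdGens (inl (single s v)) ≤ 2 * s.natAbs + v.natAbs := by
  rw [inl_single]
  have h₁ := wordLength_mul_le (mem_closure_stdGens (bZ ^ (-s) * aZ ^ v))
    (mem_closure_stdGens (bZ ^ s))
  have h₂ := wordLength_mul_le (mem_closure_stdGens (bZ ^ (-s))) (mem_closure_stdGens (aZ ^ v))
  have := wordLength_zpow_le bZ_mem_stdGens (-s)
  have := wordLength_zpow_le aZ_mem_stdGens v
  have := wordLength_zpow_le bZ_mem_stdGens s
  rw [Int.natAbs_neg] at *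
  omega

lemma wordLength_inl_le (f : Base) :
    wordLength stdGens (inl f) ≤ (2 * radius f + 1) * (2 * radius f) + l1Norm f :=
  calc wordLength stdGens (inl f)
      ≤ ∑ x ∈ supp f, wordLength stdGens (inl (single x (coeff f x))) := by
        conv_lhs => rw [← prod_single_coeff f]
        exact wordLength_map_prod_le _ closure_stdGens _ _
    _ ≤ ∑ x ∈ supp f, (2 * radius f + (coeff f x).natAbs) := Finset.sum_le_sum fun x hx =>
        (wordLength_inl_single_le _ _).trans (by gcongr; exact natAbs_le_radius hx)
    _ = (supp f).card * (2 * radius f) + l1Norm f := by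
        rw [Finset.sum_add_distrib, Finset.sum_const, smul_eq_mul, l1Norm]
    _ ≤ (2 * radius f + 1) * (2 * radius f) + l1Norm f := by
        gcongr
        exact card_supp_le f

lemma wordLength_le_inl_left_add (g : ZwrZ) :
    wordLength stdGens g ≤ wordLength stdGens (inl g.left) + (toAdd g.right).natAbs := by
  have hg : g = inl g.left * bZ ^ toAdd g.right := by
    rw [bZ_zpow, ofAdd_toAdd, inl_left_mul_inr_right]
  conv_lhs => rw [hg]
  exact (wordLength_mul_le (mem_closure_stdGens _) (mem_closure_stdGens _)).trans
    (by gcongr; exact wordLength_zpow_le bZ_mem_stdGens _)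

lemma exists_of_mem_stdGens_union_inv {t : ZwrZ} (ht : t ∈ stdGens ∪ stdGens⁻¹) :
    ∃ e : ℤ, e.natAbs = 1 ∧ (t = inl (single 0 e) ∨ t = inr (ofAdd e)) := by
  have ha : aZ = inl (single 0 1) := by simpa using aZ_zpow 1
  have hb : bZ = inr (ofAdd 1) := rfl
  rcases ht with (rfl | rfl) | (h | h)
  · exact ⟨1, rfl, Or.inl ha⟩
  · exact ⟨1, rfl, Or.inr hb⟩
  · refine ⟨-1, rfl, Or.inl ?_⟩
    rw [← inv_inv t, Set.mem_singleton_iff.1 h, ← zpow_neg_one, aZ_zpow]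
  · refine ⟨-1, rfl, Or.inr ?_⟩
    rw [← inv_inv t, (Set.mem_singleton_iff.1 h : t⁻¹ = bZ), ← zpow_neg_one, bZ_zpow]

lemma radius_left_le_wordLength (g : ZwrZ) : radius g.left ≤ wordLength stdGens g := by
  refine (le_max_left _ (toAdd g.right).natAbs).trans
    (le_wordLength_of_mul_le (fun g : ZwrZ => max (radius g.left) (toAdd g.right).natAbs)
      (by simp only [one_left, one_right, radius_one, toAdd_one, Int.natAbs_zero, max_self])
      (fun t ht g => ?_) (mem_closure_stdGens g))
  obtain ⟨e, he, rfl | rfl⟩ := exists_of_mem_stdGens_union_inv ht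
  · have := radius_mul_le (single 0 e) g.left
    have := radius_single_le 0 e
    simp only [mul_left, mul_right, left_inl, right_inl, map_one, MulAut.one_apply, one_mul]
    omega
  · have := radius_shift_le e g.left
    have := Int.natAbs_add_le e (toAdd g.right)
    simp only [mul_left, mul_right, left_inr, right_inr, one_mul, toAdd_mul, toAdd_ofAdd]
    change max (radius (shift e g.left)) _ ≤ _
    omega

lemma l1Norm_left_le_wordLength (g : ZwrZ) : l1Norm g.left ≤ wordLength stdGens g := by
  refine le_wordLength_of_mul_le (fun g => l1Norm g.left) (by simp)
    (fun t ht g => ?_) (mem_closure_stdGens g)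
  obtain ⟨e, he, rfl | rfl⟩ := exists_of_mem_stdGens_union_inv ht
  · have := l1Norm_mul_le (single 0 e) g.left
    rw [l1Norm_single, he] at this
    simpa only [mul_left, left_inl, right_inl, map_one, MulAut.one_apply, add_comm] using this
  · simp only [mul_left, left_inr, right_inr, one_mul]
    exact (l1Norm_shift e g.left).le.trans (Nat.le_succ _)

end Generators

section Embedding

open Multiplicative SemidirectProduct

noncomputable def diffHom (n : ℕ) : ZwrZ →* ZwrZ :=
  SemidirectProduct.map (diff ^ n) (MonoidHom.id Mℤ) fun g =>
    MonoidHom.ext fun f => diff_pow_shift n (toAdd g) f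

lemma diffHom_apply (n : ℕ) (g : ZwrZ) : diffHom n g = ⟨(diff ^ n) g.left, g.right⟩ := rfl

lemma diffHom_succ_apply (n : ℕ) (g : ZwrZ) : diffHom (n + 1) g = diffHom n (diffHom 1 g) := by
  rw [diffHom_apply, diffHom_apply, diffHom_apply, diff_pow_succ_apply, pow_one]

lemma diffHom_inl (n : ℕ) (f : Base) : diffHom n (inl f) = inl ((diff ^ n) f) := rfl

lemma diffHom_bZ (n : ℕ) : diffHom n bZ = bZ :=
  SemidirectProduct.ext (map_one _) rfl

lemma diffHom_injective (n : ℕ) : Function.Injective (diffHom n) := by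
  intro g h hgh
  have hl := congrArg SemidirectProduct.left hgh
  rw [diffHom_apply, diffHom_apply, Monoid.End.coe_pow] at hl
  have hr := congrArg SemidirectProduct.right hgh
  exact SemidirectProduct.ext (diff_injective.iterate n hl) hr

lemma iterC_eq (n : ℕ) : iterC n = inl ((diff ^ n) (single 0 1)) := by
  induction n with
  | zero => exact (by simpa using aZ_zpow 1 : aZ = _)
  | succ n ih =>
    rw [iterC, ih, ← zpow_one bZ, commutator_inl_bZ_zpow, pow_succ', Monoid.End.coe_mul,
      Function.comp_apply]
    rfl

lemma diffHom_aZ (n : ℕ) : diffHom n aZ = iterC n := by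
  rw [← zpow_one aZ, aZ_zpow, diffHom_inl, iterC_eq]

lemma closure_eq_range (n : ℕ) :
    Subgroup.closure {bZ, iterC n} = (diffHom n).range := by
  rw [MonoidHom.range_eq_map, ← closure_stdGens, MonoidHom.map_closure, stdGens,
    Set.image_pair, diffHom_aZ, diffHom_bZ, Set.pair_comm]

noncomputable def equivClosure (n : ℕ) : ZwrZ ≃* Subgroup.closure {bZ, iterC n} :=
  (MonoidHom.ofInjective (diffHom_injective n)).trans
    (MulEquiv.subgroupCongr (closure_eq_range n).symm)

lemma coe_equivClosure (n : ℕ) (g : ZwrZ) : (equivClosure n g : ZwrZ) = diffHom n g := rfl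

noncomputable def sumHom : ZwrZ →* Multiplicative ℤ :=
  SemidirectProduct.lift coeffSumHom 1 fun g => MonoidHom.ext fun f => by
    simp only [coeffSumHom, MulEquiv.toMonoidHom_eq_coe, MonoidHom.coe_comp,
      MonoidHom.mk'_apply, MonoidHom.coe_coe, Function.comp_apply, MonoidHom.one_apply, map_one,
      MulAut.coe_one, id_eq, EmbeddingLike.apply_eq_iff_eq]
    exact coeffSum_shift (toAdd g) f

lemma toAdd_sumHom (g : ZwrZ) : toAdd (sumHom g) = coeffSum g.left := by
  calc toAdd (sumHom g) = toAdd (sumHom (inl g.left * inr g.right)) := by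
        rw [inl_left_mul_inr_right]
    _ = coeffSum g.left := by
        simp only [sumHom, map_mul, lift_inl, lift_inr, MonoidHom.one_apply, mul_one,
          toAdd_coeffSumHom]

lemma range_diffHom_one : (diffHom 1).range = sumHom.ker := by
  ext g
  rw [MonoidHom.mem_ker, ← toAdd_eq_zero, toAdd_sumHom]
  constructor
  · rintro ⟨h, rfl⟩
    change coeffSum ((diff ^ 1) h.left) = 0
    rw [pow_one]
    exact coeffSum_diff h.left
  · intro hg
    exact ⟨⟨integrate g.left hg, g.right⟩, SemidirectProduct.ext (diff_integrate _ hg) rfl⟩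

end Embedding

section Subnormal

lemma normal_range_diffHom_one : (diffHom 1).range.Normal :=
  range_diffHom_one ▸ sumHom.normal_ker

lemma range_diffHom_succ_le (k : ℕ) : (diffHom (k + 1)).range ≤ (diffHom k).range := by
  rintro _ ⟨g, rfl⟩
  exact ⟨diffHom 1 g, (diffHom_succ_apply k g).symm⟩

lemma conj_mem_range_diffHom_succ (k : ℕ) {x h : ZwrZ} (hx : x ∈ (diffHom k).range)
    (hh : h ∈ (diffHom (k + 1)).range) : x * h * x⁻¹ ∈ (diffHom (k + 1)).range := by
  obtain ⟨w, rfl⟩ := hx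
  obtain ⟨v, rfl⟩ := hh
  obtain ⟨u, hu⟩ := normal_range_diffHom_one.conj_mem _ ⟨v, rfl⟩ w
  exact ⟨u, by rw [diffHom_succ_apply k u, hu, map_mul, map_mul, map_inv, ← diffHom_succ_apply]⟩

lemma isSubnormal_closure (n : ℕ) : IsSubnormal (Subgroup.closure {bZ, iterC n}) := by
  refine ⟨n, fun i => (diffHom (n - i)).range, by simp only [Nat.sub_zero, closure_eq_range], ?_,
    fun i hi => ?_⟩
  · simp only [Nat.sub_self, eq_top_iff]
    exact fun g _ => ⟨g, rfl⟩
  · obtain ⟨k, hk, hk'⟩ : ∃ k, n - i = k + 1 ∧ n - (i + 1) = k := ⟨n - (i + 1), by omega, rfl⟩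
    simp only [hk, hk']
    exact ⟨range_diffHom_succ_le k, fun x hx h hh => conj_mem_range_diffHom_succ k hx hh⟩

end Subnormal

section DistortionBounds

open Multiplicative SemidirectProduct

lemma add_pow_mul_add_le {n : ℕ} (hn : 1 ≤ n) (r : ℕ) :
    (2 * r + 1) * (2 * r) + (2 * r + 1) ^ n * r + r ≤ (3 ^ n + 7) * r ^ (n + 1) := by
  rcases Nat.eq_zero_or_pos r with rfl | hr
  · simp
  have h3r : 2 * r + 1 ≤ 3 * r := by omega
  have h₁ : (2 * r + 1) * (2 * r) ≤ 6 * r ^ (n + 1) :=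
    calc (2 * r + 1) * (2 * r) ≤ 3 * r * (2 * r) := by gcongr
      _ = 6 * r ^ 2 := by ring
      _ ≤ 6 * r ^ (n + 1) := by gcongr; omega
  have h₂ : (2 * r + 1) ^ n * r ≤ 3 ^ n * r ^ (n + 1) :=
    calc (2 * r + 1) ^ n * r ≤ (3 * r) ^ n * r := by gcongr
      _ = 3 ^ n * r ^ (n + 1) := by ring
  have h₃ : r ≤ r ^ (n + 1) := Nat.le_self_pow (by omega) r
  nlinarith

lemma natAbs_right_le_wordLength (g : ZwrZ) :
    (toAdd g.right).natAbs ≤ wordLength stdGens g := by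
  refine natAbs_le_wordLength (rightHom : ZwrZ →* Mℤ) (fun t ht => ?_) (mem_closure_stdGens g)
  rcases ht with rfl | rfl
  · simp [aZ, ofPassive]
  · simp [bZ, ofActive]

lemma wordLength_le_diffHom_succ (n : ℕ) (g : ZwrZ) :
    wordLength stdGens g ≤
      (3 ^ (n + 1) + 7) * wordLength stdGens (diffHom (n + 1) g) ^ (n + 2) := by
  set r := wordLength stdGens (diffHom (n + 1) g)
  have hR : radius ((diff ^ (n + 1)) g.left) ≤ r := radius_left_le_wordLength (diffHom (n + 1) g)
  have hL : l1Norm ((diff ^ (n + 1)) g.left) ≤ r := l1Norm_left_le_wordLength (diffHom (n + 1) g)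
  have hrad : radius g.left ≤ r := (radius_le_radius_diff_pow (n + 1) g.left).trans hR
  have hl1 : l1Norm g.left ≤ (2 * r + 1) ^ (n + 1) * r :=
    (l1Norm_le_of_diff_pow (n + 1) g.left).trans (by gcongr)
  have hright : (toAdd g.right).natAbs ≤ r := natAbs_right_le_wordLength (diffHom (n + 1) g)
  calc wordLength stdGens g ≤ wordLength stdGens (inl g.left) + (toAdd g.right).natAbs :=
        wordLength_le_inl_left_add g
    _ ≤ (2 * radius g.left + 1) * (2 * radius g.left) + l1Norm g.left + r := by
        gcongr
        exact wordLength_inl_le g.left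
    _ ≤ (2 * r + 1) * (2 * r) + (2 * r + 1) ^ (n + 1) * r + r := by gcongr
    _ ≤ (3 ^ (n + 1) + 7) * r ^ (n + 2) := add_pow_mul_add_le (by omega) r

noncomputable def spread (l : ℕ) : Monoid.End Base where
  toFun f := ∏ j ∈ Finset.range l, shift j f
  map_one' := by simp
  map_mul' f g := by simp [Finset.prod_mul_distrib]

lemma diff_spread (l : ℕ) (f : Base) : diff (spread l f) = f * (shift l f)⁻¹ := by
  refine ext_coeff fun x => ?_
  change coeff (∏ j ∈ Finset.range l, shift j f) x - coeff (∏ j ∈ Finset.range l, shift j f) (x + 1)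
    = _
  simp only [coeff_prod, coeff_shift, coeff_mul, coeff_inv, ← Finset.sum_sub_distrib]
  have := Finset.sum_range_sub' (fun j : ℕ => coeff f (x + j)) l
  push_cast at this ⊢
  simp only [add_assoc, add_comm (1 : ℤ)] at this ⊢
  rw [this, add_zero, sub_eq_add_neg]

lemma coeffSum_spread (l : ℕ) (f : Base) : coeffSum (spread l f) = l * coeffSum f := by
  change toAdd (coeffSumHom (∏ j ∈ Finset.range l, shift j f)) = _
  simp [map_prod, coeffSum_shift]

noncomputable def witness (l n : ℕ) : Base := (spread l ^ n) (single 0 l)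

lemma witness_succ (l n : ℕ) : witness l (n + 1) = spread l (witness l n) := by
  rw [witness, pow_succ', Monoid.End.coe_mul, Function.comp_apply, witness]

lemma coeffSum_witness (l n : ℕ) : coeffSum (witness l n) = ((l ^ (n + 1) : ℕ) : ℤ) := by
  induction n with
  | zero => simp [witness, coeffSum_single]
  | succ n ih =>
    rw [witness_succ, coeffSum_spread, ih]
    push_cast
    ring

lemma wordLength_diff_pow_witness (l n : ℕ) :
    wordLength stdGens (inl ((diff ^ n) (witness l n))) ≤ 4 ^ n * l := by
  induction n with
  | zero => simpa [witness, ← aZ_zpow] using wordLength_zpow_le aZ_mem_stdGens (l : ℤ)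
  | succ n ih =>
    have hstep : (diff ^ (n + 1)) (witness l (n + 1))
        = (diff ^ n) (witness l n) * (shift l ((diff ^ n) (witness l n)))⁻¹ := by
      rw [witness_succ, diff_pow_succ_apply, diff_spread, map_mul, map_inv, diff_pow_shift]
    rw [hstep, ← commutator_inl_bZ_zpow]
    refine (wordLength_commutator_le (mem_closure_stdGens _) (mem_closure_stdGens _)).trans ?_
    have := wordLength_zpow_le bZ_mem_stdGens (l : ℤ)
    rw [Int.natAbs_natCast] at this
    have : l ≤ 4 ^ n * l := Nat.le_mul_of_pos_left l (by positivity)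
    have : 4 ^ (n + 1) * l = 4 * (4 ^ n * l) := by ring
    omega

lemma exists_wordLength_diffHom_le (n l : ℕ) :
    ∃ g : ZwrZ, wordLength stdGens (diffHom n g) ≤ 4 ^ n * l ∧
      l ^ (n + 1) ≤ wordLength stdGens g := by
  refine ⟨inl (witness l n), wordLength_diff_pow_witness l n, ?_⟩
  have := natAbs_le_wordLength sumHom (fun t ht => ?_) (mem_closure_stdGens (inl (witness l n)))
  · rwa [toAdd_sumHom, left_inl, coeffSum_witness, Int.natAbs_natCast] at this
  · rcases ht with rfl | rfl
    · rw [toAdd_sumHom, ← zpow_one aZ, aZ_zpow, left_inl, coeffSum_single]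
      rfl
    · rw [toAdd_sumHom]
      simp [bZ, ofActive]

end DistortionBounds

lemma closure_image_equivClosure (n : ℕ) :
    Subgroup.closure (equivClosure n '' stdGens) = ⊤ := by
  rw [← MulEquiv.coe_toMonoidHom, ← MonoidHom.map_closure, closure_stdGens,
    ← MonoidHom.range_eq_map, MonoidHom.range_eq_top]
  exact (equivClosure n).surjective

lemma distEquiv_distortion_closure (n : ℕ) {T : Set ZwrZ}
    {S : Set (Subgroup.closure {bZ, iterC n})} (hT : T.Finite) (hTtop : Subgroup.closure T = ⊤)
    (hS : S.Finite) (hStop : Subgroup.closure S = ⊤) :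
    DistEquiv (distortion T (Subgroup.closure {bZ, iterC n}) S) (· ^ (n + 1)) := by
  have hlength := wordLength_map_mulEquiv (equivClosure n) stdGens
  refine distEquiv_distortion_pow stdGens_finite closure_stdGens
    (stdGens_finite.image _) (closure_image_equivClosure n) ?_ ?_ hT hTtop hS hStop
  · simp only [(equivClosure n).surjective.forall, hlength, coe_equivClosure]
    cases n with
    | zero => exact ⟨1, fun g => by simp [diffHom_apply]⟩
    | succ n => exact ⟨_, wordLength_le_diffHom_succ n⟩
  · refine ⟨4 ^ n, fun l => ?_⟩
    obtain ⟨g, hg, hlg⟩ := exists_wordLength_diffHom_le n l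
    exact ⟨equivClosure n g, hg, (hlength g).symm ▸ hlg⟩

/-- For every `m ≥ 1`, the subgroup `H_m = ⟨b, c_m⟩` of `ℤ wr ℤ`, where
`c_m` is the `(m-1)`-fold commutator `[⋯[[a,b],b],⋯,b]`, is isomorphic to `ℤ wr ℤ`,
subnormal, and has distortion `≈ l^m`; moreover `H_2 = ⟨b, [a,b]⟩` is normal. -/
theorem statement4 (m : ℕ) (hm : 1 ≤ m) :
    Nonempty (↥(Subgroup.closure {bZ, iterC (m - 1)}) ≃* ZwrZ) ∧
    IsSubnormal (Subgroup.closure {bZ, iterC (m - 1)}) ∧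
    (∀ (T : Set ZwrZ) (S : Set ↥(Subgroup.closure {bZ, iterC (m - 1)})),
      T.Finite → Subgroup.closure T = ⊤ → S.Finite → Subgroup.closure S = ⊤ →
      DistEquiv (distortion T (Subgroup.closure {bZ, iterC (m - 1)}) S) (fun l => l ^ m)) ∧
    (Subgroup.closure {bZ, iterC 1}).Normal := by
  obtain ⟨n, rfl⟩ : ∃ n, m = n + 1 := ⟨m - 1, by omega⟩
  rw [Nat.add_sub_cancel]
  exact ⟨⟨(equivClosure n).symm⟩, isSubnormal_closure n,
    fun T S hT hTtop hS hStop => distEquiv_distortion_closure n hT hTtop hS hStop,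
    closure_eq_range 1 ▸ normal_range_diffHom_one⟩

end DistortionPaper
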